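/- arXiv:2505.20999 — 4 statements merged into one kernel-verified Lean document; each statement's English description precedes it below -/
import Mathlib

section
/- Let φ be an automorphism of a finite group G and let N be a normal φ-invariant subgroup of G. Then the order of the fixed-point subgroup of the induced automorphism on G/N is at most the order of the fixed-point subgroup of φ on G, i.e. |C_{G/N}(φ)| ≤ |C_G(φ)|. -/
/-- The fixed-point subgroup `C_G(φ)` of an automorphism `φ` of `G`. -/
def fixedSubgroup {G : Type*} [Group G] (φ : G ≃* G) : Subgroup G where
  carrier := {g | φ g = g}
  one_mem' := map_one φ
  mul_mem' := fun {a b} ha hb => by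
    simp only [Set.mem_setOf_eq] at *; rw [map_mul, ha, hb]
  inv_mem' := fun {a} ha => by
    simp only [Set.mem_setOf_eq] at *; rw [map_inv, ha]

/-- If `N` is a normal φ-invariant subgroup, then `|C_{G/N}(φ̄)| ≤ |C_G(φ)|`. -/
theorem stmt_2 {G : Type*} [Group G] [Finite G] (φ : G ≃* G) (N : Subgroup G)
    [N.Normal] (hN : N.map φ.toMonoidHom = N) :
    Nat.card (fixedSubgroup (QuotientGroup.congr N N φ hN)) ≤
      Nat.card (fixedSubgroup φ) := by
  classical
  set C := fixedSubgroup φ with hC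
  set F := fixedSubgroup (QuotientGroup.congr N N φ hN) with hF
  set H : Subgroup G := F.comap (QuotientGroup.mk' N) with hH
  -- membership in H
  have hmemH : ∀ g : G, g ∈ H ↔ (g⁻¹ * φ g) ∈ N := by
    intro g
    simp only [hH, Subgroup.mem_comap, QuotientGroup.mk'_apply]
    constructor
    · intro h
      have : QuotientGroup.mk (φ g) = (QuotientGroup.mk g : G ⧸ N) := by
        rw [← QuotientGroup.congr_mk N N φ hN]; exact h
      have := QuotientGroup.eq.mp this.symm
      simpa using this
    · intro h
      have : QuotientGroup.mk (φ g) = (QuotientGroup.mk g : G ⧸ N) :=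
        (QuotientGroup.eq.mpr (by simpa using h)).symm
      show QuotientGroup.congr N N φ hN (QuotientGroup.mk g) = QuotientGroup.mk g
      rw [QuotientGroup.congr_mk N N φ hN]; exact this
  have hNleH : N ≤ H := by
    intro n hn
    rw [hmemH]
    have h1 : φ n ∈ N := by rw [← hN]; exact ⟨n, hn, rfl⟩
    exact N.mul_mem (N.inv_mem hn) h1
  -- ψ : H →* G ⧸ N
  set ψ : H →* G ⧸ N := (QuotientGroup.mk' N).comp H.subtype with hψ
  have hker : ψ.ker = N.subgroupOf H := by
    ext ⟨x, hx⟩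
    simp [hψ, MonoidHom.mem_ker, Subgroup.mem_subgroupOf, QuotientGroup.eq_one_iff]
  have hrange : ψ.range = F := by
    ext q
    constructor
    · rintro ⟨⟨x, hx⟩, rfl⟩; exact hx
    · intro hq
      obtain ⟨g, rfl⟩ := QuotientGroup.mk'_surjective N q
      exact ⟨⟨g, hq⟩, rfl⟩
  -- card H = card F * card N
  have e1 : Nat.card H = Nat.card F * Nat.card N := by
    rw [Subgroup.card_eq_card_quotient_mul_card_subgroup ψ.ker]
    congr 1
    · rw [← hrange]; exact Nat.card_congr (QuotientGroup.quotientKerEquivRange ψ).toEquiv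
    · rw [hker]; exact Nat.card_congr (Subgroup.subgroupOfEquivOfLe hNleH).toEquiv
  -- card H ≤ card N * card C via injection
  have e2 : Nat.card H ≤ Nat.card N * Nat.card C := by
    set f : G → G := fun g => g⁻¹ * φ g with hf
    set r : G → G := Function.invFun f with hr
    have key : ∀ g : G, g * (r (f g))⁻¹ ∈ C := by
      intro g
      have hfr : f (r (f g)) = f g := Function.invFun_eq ⟨g, rfl⟩
      show φ (g * (r (f g))⁻¹) = g * (r (f g))⁻¹
      set h := r (f g)
      have h1 : φ g = g * f g := by simp [hf]
      have h2 : φ h = h * f g := by rw [← hfr]; simp [hf]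
      rw [map_mul, map_inv, h1, h2]
      group
    have hinj : Function.Injective
        (fun x : H => ((⟨f x.1, (hmemH x.1).mp x.2⟩ : N),
          (⟨x.1 * (r (f x.1))⁻¹, key x.1⟩ : C))) := by
      rintro ⟨x, hx⟩ ⟨y, hy⟩ hxy
      simp only [Prod.mk.injEq, Subtype.mk.injEq] at hxy
      obtain ⟨h1, h2⟩ := hxy
      rw [h1] at h2
      ext
      exact mul_right_cancel h2
    calc Nat.card H ≤ Nat.card (N × C) := Nat.card_le_card_of_injective _ hinj
      _ = Nat.card N * Nat.card C := Nat.card_prod _ _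
  have hNpos : 0 < Nat.card N := Nat.card_pos
  rw [e1, mul_comm (Nat.card N) (Nat.card C)] at e2
  exact Nat.le_of_mul_le_mul_right e2 hNpos
end

section
/- Let φ be an automorphism of a finite group G and let N be a normal φ-invariant subgroup of G such that |C_{G/N}(φ)| = |C_G(φ)|, where C denotes the fixed-point subgroup of the (induced) automorphism. Then every element of N is a commutator with φ, that is, N ⊆ I_G(φ) = {g⁻¹ · φ(g) : g ∈ G}. -/
/-!
The map `g ↦ g⁻¹ * φ g` is constant exactly on the right cosets of `C_G(φ)`, so
`|I_G(φ)| * |C_G(φ)| = |G|`, and likewise for the induced automorphism of `G/N`.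
Since `I_G(φ)` lies in the preimage of `I_{G/N}(φ)`, which has `|N| * |I_{G/N}(φ)|` elements,
the hypothesis `|C_{G/N}(φ)| = |C_G(φ)|` forces the two sets to coincide; and this preimage
contains `N` because `1 ∈ I_{G/N}(φ)`.
-/

section

variable {G : Type*} [Group G]

theorem mem_fixedSubgroup_iff (φ : G ≃* G) {g : G} : g ∈ fixedSubgroup φ ↔ φ g = g := Iff.rfl

/-- The set `I_G(φ)`. -/
def autCommutatorSet (φ : G ≃* G) : Set G := Set.range fun g => g⁻¹ * φ g

theorem one_mem_autCommutatorSet (φ : G ≃* G) : 1 ∈ autCommutatorSet φ :=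
  ⟨1, by simp⟩

theorem ker_inv_mul_apply_eq_rightRel (φ : G ≃* G) :
    Setoid.ker (fun g => g⁻¹ * φ g) = QuotientGroup.rightRel (fixedSubgroup φ) := by
  ext a b
  rw [Setoid.ker_def, QuotientGroup.rightRel_apply, mem_fixedSubgroup_iff, map_mul, map_inv,
    ← mul_right_inj b, mul_inv_cancel_left, ← mul_assoc, ← eq_mul_inv_iff_mul_eq, eq_comm]

theorem card_autCommutatorSet_mul_card_fixedSubgroup (φ : G ≃* G) :
    Nat.card (autCommutatorSet φ) * Nat.card (fixedSubgroup φ) = Nat.card G := by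
  rw [Subgroup.card_eq_card_quotient_mul_card_subgroup (fixedSubgroup φ)]
  congr 1
  exact Nat.card_congr <| (Setoid.quotientKerEquivRange _).symm.trans <|
    (Quotient.congrRight fun _ _ => by rw [ker_inv_mul_apply_eq_rightRel]).trans
    (QuotientGroup.quotientRightRelEquivQuotientLeftRel _)

variable (φ : G ≃* G) (N : Subgroup G) [N.Normal] (hN : N.map φ.toMonoidHom = N)

theorem autCommutatorSet_subset_preimage_mk :
    autCommutatorSet φ ⊆
      QuotientGroup.mk ⁻¹' autCommutatorSet (QuotientGroup.congr N N φ hN) := by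
  rintro - ⟨g, rfl⟩
  exact ⟨g, congrArg ((g : G ⧸ N)⁻¹ * ·) (QuotientGroup.congr_mk N N φ hN g)⟩

theorem card_preimage_mk_autCommutatorSet_mul_card_fixedSubgroup :
    Nat.card (QuotientGroup.mk ⁻¹' autCommutatorSet (QuotientGroup.congr N N φ hN))
      * Nat.card (fixedSubgroup (QuotientGroup.congr N N φ hN)) = Nat.card G := by
  rw [Nat.card_congr (QuotientGroup.preimageMkEquivSubgroupProdSet N _), Nat.card_prod, mul_assoc,
    card_autCommutatorSet_mul_card_fixedSubgroup, mul_comm,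
    ← Subgroup.card_eq_card_quotient_mul_card_subgroup]

theorem autCommutatorSet_eq_preimage_mk [Finite G]
    (h : Nat.card (fixedSubgroup (QuotientGroup.congr N N φ hN)) = Nat.card (fixedSubgroup φ)) :
    autCommutatorSet φ =
      QuotientGroup.mk ⁻¹' autCommutatorSet (QuotientGroup.congr N N φ hN) := by
  refine Set.eq_of_subset_of_ncard_le (autCommutatorSet_subset_preimage_mk φ N hN) ?_
    (Set.toFinite _)
  rw [← Nat.card_coe_set_eq, ← Nat.card_coe_set_eq]
  refine Nat.le_of_mul_le_mul_right ?_ (Nat.card_pos (α := fixedSubgroup φ))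
  rw [card_autCommutatorSet_mul_card_fixedSubgroup, ← h,
    card_preimage_mk_autCommutatorSet_mul_card_fixedSubgroup]

end

/-- If `N` is a normal φ-invariant subgroup with `|C_{G/N}(φ̄)| = |C_G(φ)|`,
then `N ⊆ I_G(φ)`. -/
theorem stmt_3 {G : Type*} [Group G] [Finite G] (φ : G ≃* G) (N : Subgroup G)
    [N.Normal] (hN : N.map φ.toMonoidHom = N)
    (h : Nat.card (fixedSubgroup (QuotientGroup.congr N N φ hN)) =
      Nat.card (fixedSubgroup φ)) :
    ∀ x ∈ N, ∃ g : G, x = g⁻¹ * φ g := by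
  intro x hx
  have hx_preimage :
      x ∈ QuotientGroup.mk ⁻¹' autCommutatorSet (QuotientGroup.congr N N φ hN) := by
    rw [Set.mem_preimage, (QuotientGroup.eq_one_iff x).mpr hx]
    exact one_mem_autCommutatorSet _
  rw [← autCommutatorSet_eq_preimage_mk φ N hN h] at hx_preimage
  obtain ⟨g, hg⟩ := hx_preimage
  exact ⟨g, hg.symm⟩
end

section
/- Let φ be an automorphism of a finite group G and N a normal φ-invariant subgroup such that N ⊆ I_G(φ) = {g⁻¹ · φ(g) : g ∈ G}. If S is a subgroup of N such that φ(S) = Sᵃ for some a ∈ N, then there exists b ∈ G with a = b⁻¹φ(b) and the conjugate subgroup S^{b⁻¹} is φ-invariant. -/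
/-- If `N ⊆ I_G(φ)`, `S ≤ N` and `φ(S) = Sᵃ` for some `a ∈ N`, then there is
`b ∈ G` with `a = b⁻¹ φ(b)` such that `S^{b⁻¹} = b S b⁻¹` is φ-invariant. -/
theorem stmt_4 {G : Type*} [Group G] [Finite G] (φ : G ≃* G) (N : Subgroup G)
    [N.Normal] (hNinv : N.map φ.toMonoidHom = N)
    (hNI : ∀ x ∈ N, ∃ g : G, x = g⁻¹ * φ g)
    (S : Subgroup G) (hSN : S ≤ N) (a : G) (ha : a ∈ N)
    (hS : S.map φ.toMonoidHom = S.map (MulAut.conj a⁻¹).toMonoidHom) :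
    ∃ b : G, a = b⁻¹ * φ b ∧
      (S.map (MulAut.conj b).toMonoidHom).map φ.toMonoidHom =
        S.map (MulAut.conj b).toMonoidHom := by
  obtain ⟨b, hb⟩ := hNI a ha
  refine ⟨b, hb, ?_⟩
  have key : ∀ x, φ (b * x * b⁻¹) = b * (a * φ x * a⁻¹) * b⁻¹ := by
    intro x
    have : a = b⁻¹ * φ b := hb
    simp only [map_mul, map_inv, this]
    group
  ext g
  simp only [Subgroup.mem_map, MulEquiv.coe_toMonoidHom, MulAut.conj_apply]
  constructor
  · rintro ⟨y, ⟨x, hx, rfl⟩, rfl⟩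
    have hφx : φ x ∈ S.map (MulAut.conj a⁻¹).toMonoidHom := by
      rw [← hS]; exact ⟨x, hx, rfl⟩
    obtain ⟨z, hz, hz2⟩ := hφx
    simp only [MulEquiv.coe_toMonoidHom, MulAut.conj_apply, inv_inv] at hz2
    refine ⟨z, hz, ?_⟩
    rw [key x, ← hz2]
    group
  · rintro ⟨x, hx, rfl⟩
    have hφx : (MulAut.conj a⁻¹).toMonoidHom x ∈ S.map φ.toMonoidHom := by
      rw [hS]; exact ⟨x, hx, rfl⟩
    obtain ⟨z, hz, hz2⟩ := hφx
    simp only [MulEquiv.coe_toMonoidHom, MulAut.conj_apply, inv_inv] at hz2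
    refine ⟨b * z * b⁻¹, ⟨z, hz, rfl⟩, ?_⟩
    rw [key z, hz2]
    group
end

section
/- Let φ be a fixed-point-free automorphism of a finite solvable group G. Then for every set of primes π, G has a φ-invariant Hall π-subgroup. -/
/-!
Induction on `|G|`. Inside the last nontrivial term of the derived series, a Sylow subgroup is a
nontrivial characteristic abelian `p`-subgroup `N`; `φ` induces fixed-point-free automorphisms of
`G ⧸ N` and of every `φ`-invariant subgroup. By induction `G ⧸ N` has a `φ`-invariant Hall
`π`-subgroup, whose preimage `H` is `φ`-invariant. If `p ∈ π`, `H` is Hall in `G`. If `p ∉ π`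
and `H < G`, induct inside `H`. If `H = G`, then `N` is a normal abelian Hall `π'`-subgroup, so by
Schur–Zassenhaus it has complements and they are all `N`-conjugate: `φ C = n C n⁻¹` for a
complement `C`. Since `g ↦ g / φ g` is injective, it is onto `N`, so `n = (φ m)⁻¹ m` for some
`m ∈ N`, and then `m C m⁻¹` is `φ`-invariant.
-/

open MonoidHom MulAction

def Nat.IsPiNumber (π : Set ℕ) (n : ℕ) : Prop :=
  ∀ p : ℕ, p.Prime → p ∣ n → p ∈ π

namespace Nat.IsPiNumber

variable {π : Set ℕ} {m n : ℕ}

theorem one : IsPiNumber π 1 := fun _ hp hd => absurd (Nat.dvd_one.mp hd) hp.ne_one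

theorem mul (hm : IsPiNumber π m) (hn : IsPiNumber π n) : IsPiNumber π (m * n) :=
  fun p hp hd => (hp.dvd_mul.mp hd).elim (hm p hp) (hn p hp)

theorem prime_pow {p : ℕ} (hp : p.Prime) (hπ : p ∈ π) (k : ℕ) : IsPiNumber π (p ^ k) :=
  fun _ hq hd => (Nat.prime_dvd_prime_iff_eq hq hp).mp (hq.dvd_of_dvd_pow hd) ▸ hπ

theorem coprime (hm : IsPiNumber π m) (hn : IsPiNumber πᶜ n) : m.Coprime n :=
  Nat.coprime_of_dvd fun p hp hdm hdn => hn p hp hdn (hm p hp hdm)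

end Nat.IsPiNumber

namespace MulEquiv

variable {G : Type*} [Group G] {φ : G ≃* G} {H : Subgroup G}

def restrictOfMapEq (φ : G ≃* G) (hH : H.map φ.toMonoidHom = H) : H ≃* H :=
  (φ.subgroupMap H).trans (MulEquiv.subgroupCongr hH)

theorem fixedPointFree_restrictOfMapEq (hφ : FixedPointFree φ) (hH : H.map φ.toMonoidHom = H) :
    FixedPointFree (φ.restrictOfMapEq hH) :=
  fun x hx => Subtype.ext (hφ x (congrArg Subtype.val hx))

theorem fixedPointFree_quotientCongr [Finite G] (hφ : FixedPointFree φ) {N : Subgroup G}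
    [N.Normal] (hN : N.map φ.toMonoidHom = N) :
    FixedPointFree (QuotientGroup.congr N N φ hN) := by
  intro x hx
  induction x using QuotientGroup.induction_on with | H g => ?_
  have hgN : g⁻¹ * φ g ∈ N := QuotientGroup.eq.mp hx.symm
  -- correct `g` by an element of `N` to an honest fixed point of `φ`
  obtain ⟨m, hm⟩ :=
    (fixedPointFree_restrictOfMapEq hφ hN).commutatorMap_surjective ⟨_, hgN⟩
  have hfix : φ (g * m) = g * m := by
    have hm' : (m : G) = g⁻¹ * φ g * φ m := div_eq_iff_eq_mul.mp (congrArg Subtype.val hm)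
    rw [map_mul]
    conv_rhs => rw [hm']
    group
  rw [QuotientGroup.eq_one_iff, ← mul_inv_cancel_right g (m : G), hφ _ hfix, one_mul]
  exact N.inv_mem m.2

end MulEquiv

namespace Subgroup

variable {G : Type*} [Group G]

structure IsHall (π : Set ℕ) (H : Subgroup G) : Prop where
  card : Nat.IsPiNumber π (Nat.card H)
  index : Nat.IsPiNumber πᶜ H.index

section Hall

variable {π : Set ℕ}

theorem isHall_top_of_subsingleton [Subsingleton G] : (⊤ : Subgroup G).IsHall π where
  card := by rw [card_top, Nat.card_of_subsingleton (1 : G)]; exact .one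
  index := by rw [index_top]; exact .one

theorem IsHall.comap_mk' [Finite G] {N : Subgroup G} [N.Normal]
    (hN : Nat.IsPiNumber π (Nat.card N)) {K : Subgroup (G ⧸ N)} (hK : K.IsHall π) :
    (K.comap (QuotientGroup.mk' N)).IsHall π := by
  have hindex : (K.comap (QuotientGroup.mk' N)).index = K.index :=
    K.index_comap_of_surjective (QuotientGroup.mk'_surjective N)
  have hcard : Nat.card (K.comap (QuotientGroup.mk' N)) = Nat.card N * Nat.card K := by
    refine Nat.eq_of_mul_eq_mul_right (Nat.pos_of_ne_zero K.index_ne_zero_of_finite) ?_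
    rw [← hindex, card_mul_index, hindex, mul_assoc, card_mul_index, mul_comm,
      ← card_eq_card_quotient_mul_card_subgroup]
  exact ⟨hcard ▸ hN.mul hK.card, hindex ▸ hK.index⟩

theorem IsHall.map_subtype {H : Subgroup G} (hH : Nat.IsPiNumber πᶜ H.index) {L : Subgroup H}
    (hL : L.IsHall π) : (L.map H.subtype).IsHall π where
  card := (card_map_of_injective H.subtype_injective).symm ▸ hL.card
  index := (index_map_subtype L).symm ▸ hL.index.mul hH

theorem IsComplement'.isHall {N K : Subgroup G} (h : IsComplement' N K)
    (hN : Nat.IsPiNumber πᶜ (Nat.card N)) (hNindex : Nat.IsPiNumber π N.index) : K.IsHall π :=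
  ⟨h.symm.index_eq_card ▸ hNindex, h.index_eq_card ▸ hN⟩

end Hall

theorem map_map_subtype_restrictOfMapEq {φ : G ≃* G} {H : Subgroup G}
    (hH : H.map φ.toMonoidHom = H) (L : Subgroup H) :
    (L.map H.subtype).map φ.toMonoidHom =
      (L.map (φ.restrictOfMapEq hH).toMonoidHom).map H.subtype := by
  rw [map_map, map_map]
  rfl

theorem map_comap_mk'_congr {φ : G ≃* G} {N : Subgroup G} [N.Normal]
    (hN : N.map φ.toMonoidHom = N) (K : Subgroup (G ⧸ N)) :
    (K.comap (QuotientGroup.mk' N)).map φ.toMonoidHom =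
      (K.map (QuotientGroup.congr N N φ hN).toMonoidHom).comap (QuotientGroup.mk' N) := by
  ext g
  rw [mem_map_equiv, mem_comap, mem_comap, mem_map_equiv]
  rfl

theorem IsComplement'.map_mulEquiv [Finite G] {H K : Subgroup G} (h : IsComplement' H K)
    (φ : G ≃* G) : IsComplement' (H.map φ.toMonoidHom) (K.map φ.toMonoidHom) := by
  refine isComplement'_of_card_mul_and_disjoint ?_ ?_
  · rw [card_map_of_injective φ.injective, card_map_of_injective φ.injective, h.card_mul_card]
  · rw [disjoint_iff, ← map_inf _ _ _ φ.injective, disjoint_iff.mp h.disjoint, map_bot]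

section Complements

variable [Finite G] {N : Subgroup G} [N.Normal] [IsMulCommutative N]

theorem exists_stabilizer_quotientDiff_eq (hco : (Nat.card N).Coprime N.index) {K : Subgroup G}
    (hK : IsComplement' N K) : ∃ α : N.QuotientDiff, stabilizer G α = K := by
  let α : N.QuotientDiff := Quotient.mk'' ⟨K, hK.symm⟩
  refine ⟨α, (eq_of_le_of_card_ge (fun g hg => ?_) ?_).symm⟩
  · exact congrArg Quotient.mk'' (Subtype.ext (op_smul_coe_set (K.inv_mem hg)))
  · rw [← hK.symm.index_eq_card, ← (isComplement'_stabilizer_of_coprime hco).symm.index_eq_card]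

theorem IsComplement'.exists_map_conj_eq (hco : (Nat.card N).Coprime N.index)
    {K K' : Subgroup G} (hK : IsComplement' N K) (hK' : IsComplement' N K') :
    ∃ n ∈ N, K.map (MulAut.conj n).toMonoidHom = K' := by
  obtain ⟨α, rfl⟩ := exists_stabilizer_quotientDiff_eq hco hK
  obtain ⟨β, rfl⟩ := exists_stabilizer_quotientDiff_eq hco hK'
  obtain ⟨n, rfl⟩ := exists_smul_eq hco α β
  exact ⟨n, n.2, (stabilizer_smul_eq_stabilizer_map_conj (n : G) α).symm⟩

theorem exists_isComplement'_map_eq (hco : (Nat.card N).Coprime N.index) {φ : G ≃* G}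
    (hφ : FixedPointFree φ) (hN : N.map φ.toMonoidHom = N) :
    ∃ K : Subgroup G, IsComplement' N K ∧ K.map φ.toMonoidHom = K := by
  obtain ⟨K, hK⟩ := exists_right_complement'_of_coprime hco
  obtain ⟨n, hnN, hn⟩ := hK.exists_map_conj_eq hco (hN ▸ hK.map_mulEquiv φ)
  obtain ⟨x, hx⟩ := (MulEquiv.fixedPointFree_restrictOfMapEq hφ hN).commutatorMap_surjective
    ⟨n, hnN⟩⁻¹
  have hxn : φ (x : G)⁻¹ * n = (x : G)⁻¹ := by
    have hx' : (x : G) / φ x = n⁻¹ := congrArg Subtype.val hx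
    rw [← inv_inv n, ← hx', map_inv, div_eq_mul_inv]
    group
  refine ⟨K.map (MulAut.conj (x : G)⁻¹).toMonoidHom, ?_, ?_⟩
  · have hNc : N.map (MulAut.conj (x : G)⁻¹).toMonoidHom = N := Normal.map_conj_eq N _
    simpa only [hNc] using hK.map_mulEquiv (MulAut.conj (x : G)⁻¹)
  · have hconj (g : G) : φ.toMonoidHom.comp (MulAut.conj g).toMonoidHom =
        (MulAut.conj (φ g)).toMonoidHom.comp φ.toMonoidHom := by
      ext; simp
    rw [map_map, hconj, ← map_map, ← hn, map_map]
    congr 1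
    ext y
    simp only [MonoidHom.comp_apply, MulEquiv.coe_toMonoidHom, MulAut.conj_apply]
    conv_rhs => rw [← hxn]
    group

end Complements

theorem exists_characteristic_isMulCommutative_ne_bot [Group.IsSolvable G] [Nontrivial G] :
    ∃ A : Subgroup G, A.Characteristic ∧ IsMulCommutative A ∧ A ≠ ⊥ := by
  classical
  have hsolv : ∃ n, derivedSeries G n = ⊥ := Group.IsSolvable.solvable
  obtain ⟨k, hk⟩ : ∃ k, Nat.find hsolv = k + 1 := Nat.exists_eq_succ_of_ne_zero fun h0 =>
    top_ne_bot ((derivedSeries_zero G).symm.trans (h0 ▸ Nat.find_spec hsolv))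
  refine ⟨derivedSeries G k, inferInstance, ?_, Nat.find_min hsolv (by omega)⟩
  rw [← commutator_self_eq_bot_iff, ← derivedSeries_succ, ← hk]
  exact Nat.find_spec hsolv

theorem exists_characteristic_isPGroup_ne_bot [Finite G] [Group.IsSolvable G] [Nontrivial G] :
    ∃ (p : ℕ) (N : Subgroup G), p.Prime ∧ N.Characteristic ∧ IsMulCommutative N ∧
      IsPGroup p N ∧ N ≠ ⊥ := by
  obtain ⟨A, hAchar, hAcomm, hAbot⟩ := exists_characteristic_isMulCommutative_ne_bot (G := G)
  have hp : (Nat.card A).minFac.Prime := Nat.minFac_prime (card_eq_one.not.mpr hAbot)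
  have := Fact.mk hp
  let P : Sylow (Nat.card A).minFac A := default
  have := P.characteristic_of_normal inferInstance
  refine ⟨_, (P : Subgroup A).map A.subtype, hp, inferInstance, inferInstance,
    P.isPGroup'.map _, ?_⟩
  rw [Ne, map_eq_bot_iff_of_injective _ A.subtype_injective]
  exact P.ne_bot_of_dvd_card (Nat.minFac_dvd _)

theorem exists_isHall_map_eq_of_fixedPointFree (π : Set ℕ) [Finite G] [Group.IsSolvable G]
    {φ : G ≃* G} (hφ : FixedPointFree φ) :
    ∃ H : Subgroup G, H.IsHall π ∧ H.map φ.toMonoidHom = H := by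
  induction hn : Nat.card G using Nat.strong_induction_on generalizing G with | _ n ih => ?_
  subst hn
  rcases subsingleton_or_nontrivial G with _ | _
  · exact ⟨⊤, isHall_top_of_subsingleton, map_top_of_surjective _ φ.surjective⟩
  obtain ⟨p, N, hp, hNchar, hNcomm, hNp, hNbot⟩ := exists_characteristic_isPGroup_ne_bot (G := G)
  have hN : N.map φ.toMonoidHom = N := characteristic_iff_map_eq.mp hNchar φ
  have hQ : Nat.card (G ⧸ N) < Nat.card G := by
    rw [← index_eq_card, ← N.index_mul_card]
    exact lt_mul_of_one_lt_right (Nat.pos_of_ne_zero index_ne_zero_of_finite)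
      (N.one_lt_card_iff_ne_bot.mpr hNbot)
  obtain ⟨K, hK, hKφ⟩ := ih _ hQ (MulEquiv.fixedPointFree_quotientCongr hφ hN) rfl
  set H := K.comap (QuotientGroup.mk' N)
  have hHφ : H.map φ.toMonoidHom = H := by rw [map_comap_mk'_congr hN, hKφ]
  have := Fact.mk hp
  obtain ⟨k, hk⟩ := IsPGroup.iff_card.mp hNp
  by_cases hpπ : p ∈ π
  · exact ⟨H, hK.comap_mk' (hk ▸ .prime_pow hp hpπ k), hHφ⟩
  have hNπ' : Nat.IsPiNumber πᶜ (Nat.card N) := hk ▸ .prime_pow hp hpπ k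
  have hHindex : Nat.IsPiNumber πᶜ H.index :=
    (K.index_comap_of_surjective (QuotientGroup.mk'_surjective N)).symm ▸ hK.index
  by_cases hHtop : H = ⊤
  · have hKtop : K = ⊤ :=
      comap_injective (QuotientGroup.mk'_surjective N) (hHtop.trans (comap_top _).symm)
    have hNindex : Nat.IsPiNumber π N.index := by
      rw [index_eq_card, ← card_top (G := G ⧸ N), ← hKtop]
      exact hK.card
    obtain ⟨C, hC, hCφ⟩ := exists_isComplement'_map_eq (hNindex.coprime hNπ').symm hφ hN
    exact ⟨C, hC.isHall hNπ' hNindex, hCφ⟩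
  · have hH : Nat.card H < Nat.card G := by
      rw [← H.index_mul_card]
      exact lt_mul_of_one_lt_left Nat.card_pos (one_lt_index_of_ne_top hHtop)
    obtain ⟨L, hL, hLφ⟩ := ih _ hH (MulEquiv.fixedPointFree_restrictOfMapEq hφ hHφ) rfl
    refine ⟨L.map H.subtype, hL.map_subtype hHindex, ?_⟩
    rw [map_map_subtype_restrictOfMapEq hHφ, hLφ]

end Subgroup

/-- A finite solvable group with a fixed-point-free automorphism `φ` has a φ-invariant
Hall π-subgroup for every set of primes `π`. -/
theorem stmt_9 {G : Type*} [Group G] [Finite G] [Group.IsSolvable G] (φ : G ≃* G)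
    (hfpf : ∀ g : G, φ g = g → g = 1) (π : Set ℕ) :
    ∃ H : Subgroup G,
      (∀ p : ℕ, p.Prime → p ∣ Nat.card H → p ∈ π) ∧
      (∀ p : ℕ, p.Prime → p ∣ H.index → p ∉ π) ∧
      H.map φ.toMonoidHom = H := by
  obtain ⟨H, hH, hHφ⟩ := Subgroup.exists_isHall_map_eq_of_fixedPointFree π hfpf
  exact ⟨H, hH.card, hH.index, hHφ⟩
end
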